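/- There exist absolute constants C, c > 0 with the following property. Let μ be a probability measure on ℂ with compact support, and suppose X_1, …, X_n are independent and identically distributed random variables with distribution μ. Then for every M, ε, t > 0, P( sup_{z ∈ ℂ : |z| ≤ M, dist(z, supp(μ)) ≥ ε} | (1/n) Σ_{j=1}^n 1/(z − X_j) − m_μ(z) | ≥ t ) ≤ C (1 + 40M/(ε² t)) exp(−c n t² ε²). -/

import Mathlib

open MeasureTheory ProbabilityTheory Filter

noncomputable section

/-- The support of a measure on ℂ: points all of whose neighborhoods have positive measure. -/
def measSupp (μ : Measure ℂ) : Set ℂ := {x | ∀ U ∈ nhds x, μ U ≠ 0}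

/-- The Cauchy–Stieltjes transform m_μ(z) = ∫ dμ(x)/(z − x). -/
def stieltjes (μ : Measure ℂ) (z : ℂ) : ℂ := ∫ x, (z - x)⁻¹ ∂μ

/-!
At a point `z` with `dist(z, supp μ) ≥ ε` the summands `1/(z - X_j)` are bounded by `1/ε`, so
Hoeffding's inequality for their real and imaginary parts gives a tail `4 exp(-n t² ε²/8)` for
the deviation at `z`. Since `|1/(z - x) - 1/(w - x)| ≤ |z - w|/ε²` for `x` in the support, the
deviation over the whole region is controlled by its values on a `tε²/4`-net of the region lying
inside it; a square grid yields such a net of `O((1 + M/(ε²t))²)` points, and a union bound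
finishes. The square of the prefactor is absorbed because a probability is at most `1`:
`min 1 (C x²) ≤ C x` for `C ≥ 1`.
-/

open Finset Real

lemma measSupp_eq_support (μ : Measure ℂ) : measSupp μ = μ.support := by
  ext x
  simp [measSupp, Measure.mem_support_iff_forall, pos_iff_ne_zero]

lemma ae_mem_measSupp (μ : Measure ℂ) : ∀ᵐ x ∂μ, x ∈ measSupp μ := by
  rw [measSupp_eq_support]
  exact Measure.support_mem_ae

section Hoeffding

variable {α Ω : Type*} [MeasurableSpace α] [MeasurableSpace Ω] {μ : Measure α}
  {P : Measure Ω} [IsProbabilityMeasure P] {X : ℕ → Ω → α}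

lemma measureReal_sum_comp_sub_integral_ge_le (hXm : ∀ j, Measurable (X j))
    (hXd : ∀ j, P.map (X j) = μ) (hXi : iIndepFun X P) {g : α → ℝ} (hg : Measurable g) {B : ℝ}
    (hgB : ∀ᵐ x ∂μ, |g x| ≤ B) (n : ℕ) {s : ℝ} (hs : 0 ≤ s) :
    P.real {ω | s ≤ ∑ j ∈ range n, (g (X j ω) - ∫ x, g x ∂μ)}
      ≤ exp (-s ^ 2 / (2 * n * B ^ 2)) := by
  have hmean : ∀ j, P[fun ω ↦ g (X j ω)] = ∫ x, g x ∂μ := fun j ↦ by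
    rw [← hXd j, integral_map (hXm j).aemeasurable hg.aestronglyMeasurable]
  have hsubG : ∀ j < n, HasSubgaussianMGF (fun ω ↦ g (X j ω) - ∫ x, g x ∂μ)
      ((‖B - -B‖₊ / 2) ^ 2) P := fun j _ ↦ by
    rw [← hmean j]
    refine hasSubgaussianMGF_of_mem_Icc (hg.comp (hXm j)).aemeasurable ?_
    have hB : ∀ᵐ x ∂P.map (X j), g x ∈ Set.Icc (-B) B := by
      rw [hXd j]; filter_upwards [hgB] with x hx using abs_le.1 hx
    exact ae_of_ae_map (hXm j).aemeasurable hB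
  have hindep : iIndepFun (fun j ω ↦ g (X j ω) - ∫ x, g x ∂μ) P :=
    hXi.comp (fun _ y ↦ g y - ∫ x, g x ∂μ) fun _ ↦ hg.sub_const _
  refine (HasSubgaussianMGF.measure_sum_range_ge_le_of_iIndepFun hindep hsubG hs).trans_eq ?_
  push_cast
  rw [Real.norm_eq_abs, show B - -B = 2 * B by ring, abs_mul, abs_two,
    mul_div_cancel_left₀ _ two_ne_zero, sq_abs]

lemma measureReal_abs_sum_comp_sub_integral_ge_le (hXm : ∀ j, Measurable (X j))
    (hXd : ∀ j, P.map (X j) = μ) (hXi : iIndepFun X P) {g : α → ℝ} (hg : Measurable g) {B : ℝ}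
    (hgB : ∀ᵐ x ∂μ, |g x| ≤ B) (n : ℕ) {s : ℝ} (hs : 0 ≤ s) :
    P.real {ω | s ≤ |∑ j ∈ range n, (g (X j ω) - ∫ x, g x ∂μ)|}
      ≤ 2 * exp (-s ^ 2 / (2 * n * B ^ 2)) := by
  have hsplit : {ω | s ≤ |∑ j ∈ range n, (g (X j ω) - ∫ x, g x ∂μ)|}
      ⊆ {ω | s ≤ ∑ j ∈ range n, (g (X j ω) - ∫ x, g x ∂μ)}
        ∪ {ω | s ≤ ∑ j ∈ range n, ((-g) (X j ω) - ∫ x, (-g) x ∂μ)} := by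
    intro ω (hω : s ≤ |_|)
    have hneg : ∑ j ∈ range n, ((-g) (X j ω) - ∫ x, (-g) x ∂μ)
        = -∑ j ∈ range n, (g (X j ω) - ∫ x, g x ∂μ) := by
      simp only [Pi.neg_apply, integral_neg, ← Finset.sum_neg_distrib, neg_sub_neg, neg_sub]
    rcases le_abs.1 hω with h | h
    · exact Or.inl h
    · exact Or.inr (show s ≤ _ by rw [hneg]; exact h)
  calc _ ≤ _ := measureReal_mono hsplit
    _ ≤ _ := measureReal_union_le _ _
    _ ≤ exp (-s ^ 2 / (2 * n * B ^ 2)) + exp (-s ^ 2 / (2 * n * B ^ 2)) :=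
      add_le_add (measureReal_sum_comp_sub_integral_ge_le hXm hXd hXi hg hgB n hs)
        (measureReal_sum_comp_sub_integral_ge_le hXm hXd hXi hg.neg (by simpa using hgB) n hs)
    _ = _ := by ring

lemma measureReal_norm_sum_comp_sub_integral_ge_le (hXm : ∀ j, Measurable (X j))
    (hXd : ∀ j, P.map (X j) = μ) (hXi : iIndepFun X P) {f : α → ℂ} (hf : Measurable f) {B : ℝ}
    (hfB : ∀ᵐ x ∂μ, ‖f x‖ ≤ B) (n : ℕ) {s : ℝ} (hs : 0 ≤ s) :
    P.real {ω | s ≤ ‖∑ j ∈ range n, (f (X j ω) - ∫ x, f x ∂μ)‖}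
      ≤ 4 * exp (-s ^ 2 / (8 * n * B ^ 2)) := by
  have : IsFiniteMeasure μ := hXd 0 ▸ inferInstance
  have hfi : Integrable f μ := Integrable.of_bound hf.aestronglyMeasurable B hfB
  have hre : ∀ ω, (∑ j ∈ range n, (f (X j ω) - ∫ x, f x ∂μ)).re
      = ∑ j ∈ range n, ((f (X j ω)).re - ∫ x, (f x).re ∂μ) := fun ω ↦ by
    have : (∫ x, f x ∂μ).re = ∫ x, (f x).re ∂μ := (integral_re hfi).symm
    simp [Complex.re_sum, this]
  have him : ∀ ω, (∑ j ∈ range n, (f (X j ω) - ∫ x, f x ∂μ)).im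
      = ∑ j ∈ range n, ((f (X j ω)).im - ∫ x, (f x).im ∂μ) := fun ω ↦ by
    have : (∫ x, f x ∂μ).im = ∫ x, (f x).im ∂μ := (integral_im hfi).symm
    simp [Complex.im_sum, this]
  have hsplit : {ω | s ≤ ‖∑ j ∈ range n, (f (X j ω) - ∫ x, f x ∂μ)‖}
      ⊆ {ω | s / 2 ≤ |∑ j ∈ range n, ((f (X j ω)).re - ∫ x, (f x).re ∂μ)|}
        ∪ {ω | s / 2 ≤ |∑ j ∈ range n, ((f (X j ω)).im - ∫ x, (f x).im ∂μ)|} := by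
    intro ω hω
    have := (Set.mem_ofPred.1 hω).trans (Complex.norm_le_abs_re_add_abs_im _)
    rw [hre, him] at this
    by_contra h
    simp only [Set.mem_union, Set.mem_ofPred_eq, not_or, not_le] at h
    linarith [h.1, h.2]
  have hbound : ∀ g : α → ℝ, Measurable g → (∀ x, |g x| ≤ ‖f x‖) →
      P.real {ω | s / 2 ≤ |∑ j ∈ range n, (g (X j ω) - ∫ x, g x ∂μ)|}
        ≤ 2 * exp (-s ^ 2 / (8 * n * B ^ 2)) := fun g hg hgf ↦
    (measureReal_abs_sum_comp_sub_integral_ge_le hXm hXd hXi hg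
      (by filter_upwards [hfB] with x hx using (hgf x).trans hx) n (s := s / 2)
      (by positivity)).trans_eq (by congr 2; ring)
  refine (measureReal_mono hsplit).trans ((measureReal_union_le _ _).trans ?_)
  linarith [hbound (fun x ↦ (f x).re) (by fun_prop) fun x ↦ Complex.abs_re_le_norm _,
    hbound (fun x ↦ (f x).im) (by fun_prop) fun x ↦ Complex.abs_im_le_norm _]

lemma measureReal_norm_mean_comp_sub_integral_ge_le (hXm : ∀ j, Measurable (X j))
    (hXd : ∀ j, P.map (X j) = μ) (hXi : iIndepFun X P) {f : α → ℂ} (hf : Measurable f) {B : ℝ}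
    (hfB : ∀ᵐ x ∂μ, ‖f x‖ ≤ B) (n : ℕ) {t : ℝ} (ht : 0 ≤ t) :
    P.real {ω | t ≤ ‖(1 / n : ℂ) * ∑ j ∈ range n, f (X j ω) - ∫ x, f x ∂μ‖}
      ≤ 4 * exp (-(n * t ^ 2) / (8 * B ^ 2)) := by
  rcases Nat.eq_zero_or_pos n with rfl | hn
  · simpa using measureReal_le_one.trans (by norm_num : (1 : ℝ) ≤ 4)
  have hsum : ∀ ω, ∑ j ∈ range n, (f (X j ω) - ∫ x, f x ∂μ)
      = n * ((1 / n : ℂ) * ∑ j ∈ range n, f (X j ω) - ∫ x, f x ∂μ) := fun ω ↦ by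
    have hn' : (n : ℂ) ≠ 0 := Nat.cast_ne_zero.2 hn.ne'
    rw [sum_sub_distrib, sum_const, card_range, nsmul_eq_mul, mul_sub, ← mul_assoc,
      mul_one_div_cancel hn', one_mul]
  have hsub : {ω | t ≤ ‖(1 / n : ℂ) * ∑ j ∈ range n, f (X j ω) - ∫ x, f x ∂μ‖}
      ⊆ {ω | n * t ≤ ‖∑ j ∈ range n, (f (X j ω) - ∫ x, f x ∂μ)‖} := fun ω (hω : t ≤ _) ↦ by
    rw [Set.mem_ofPred_eq, hsum, norm_mul, Complex.norm_natCast]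
    gcongr
  refine (measureReal_mono hsub).trans <|
    (measureReal_norm_sum_comp_sub_integral_ge_le hXm hXd hXi hf hfB n (by positivity)).trans_eq ?_
  congr 2
  field_simp

end Hoeffding

section Resolvent

variable {𝕜 : Type*} [NormedField 𝕜]

lemma norm_inv_sub_le_of_le_infDist {S : Set 𝕜} {z x : 𝕜} {ε : ℝ} (hε : 0 < ε)
    (hz : ε ≤ Metric.infDist z S) (hx : x ∈ S) : ‖(z - x)⁻¹‖ ≤ ε⁻¹ := by
  rw [norm_inv]
  exact inv_anti₀ hε (hz.trans ((Metric.infDist_le_dist_of_mem hx).trans_eq (dist_eq_norm z x)))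

lemma norm_inv_sub_sub_inv_sub_le {z w x : 𝕜} {ε : ℝ} (hε : 0 < ε) (hz : ε ≤ ‖z - x‖)
    (hw : ε ≤ ‖w - x‖) : ‖(z - x)⁻¹ - (w - x)⁻¹‖ ≤ ‖z - w‖ / ε ^ 2 := by
  have hzx : z - x ≠ 0 := norm_pos_iff.1 (hε.trans_le hz)
  have hwx : w - x ≠ 0 := norm_pos_iff.1 (hε.trans_le hw)
  rw [inv_sub_inv hzx hwx, norm_div, norm_mul, sub_sub_sub_cancel_right, norm_sub_rev, sq]
  gcongr

end Resolvent

section Nets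

lemma exists_finset_card_le_forall_abs_sub_le {M δ : ℝ} (hM : 0 ≤ M) (hδ : 0 < δ) :
    ∃ S : Finset ℝ, (#S : ℝ) ≤ 2 * M / δ + 3 ∧ ∀ x, |x| ≤ M → ∃ y ∈ S, |x - y| ≤ δ / 2 := by
  set k : ℤ := ⌈M / δ⌉
  have hk : (k : ℝ) < M / δ + 1 := Int.ceil_lt_add_one _
  refine ⟨(Icc (-k) k).image (fun m : ℤ ↦ m * δ), ?_, fun x hx ↦ ⟨round (x / δ) * δ, ?_, ?_⟩⟩
  · have hcard : (#(Icc (-k) k) : ℤ) = 2 * k + 1 := by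
      rw [Int.card_Icc]
      have : 0 ≤ k := Int.ceil_nonneg (by positivity)
      omega
    calc (#((Icc (-k) k).image (fun m : ℤ ↦ m * δ)) : ℝ) ≤ #(Icc (-k) k) := by
          exact_mod_cast card_image_le
      _ = 2 * k + 1 := by exact_mod_cast hcard
      _ ≤ 2 * M / δ + 3 := by rw [mul_div_assoc]; linarith
  · have hround := abs_le.1 (abs_sub_round (x / δ))
    have hxk : |x / δ| ≤ k := by
      rw [abs_div, abs_of_pos hδ]
      exact (div_le_div_of_nonneg_right hx hδ.le).trans (Int.le_ceil _)
    replace hxk := abs_le.1 hxk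
    have hlt : |(round (x / δ) : ℝ)| < k + 1 := abs_lt.2 ⟨by linarith, by linarith⟩
    exact mem_image_of_mem _ (mem_Icc.2 (abs_le.1 (Int.lt_add_one_iff.1 (by exact_mod_cast hlt))))
  · rw [show x - round (x / δ) * δ = (x / δ - round (x / δ)) * δ by field_simp, abs_mul,
      abs_of_pos hδ]
    linarith [mul_le_mul_of_nonneg_right (abs_sub_round (x / δ)) hδ.le]

lemma Complex.exists_finset_card_le_forall_dist_le {M δ : ℝ} (hM : 0 ≤ M) (hδ : 0 < δ) :
    ∃ F : Finset ℂ, (#F : ℝ) ≤ (2 * M / δ + 3) ^ 2 ∧ ∀ z : ℂ, ‖z‖ ≤ M → ∃ w ∈ F, dist z w ≤ δ := by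
  classical
  obtain ⟨S, hS, hSnet⟩ := exists_finset_card_le_forall_abs_sub_le hM hδ
  refine ⟨(S ×ˢ S).image fun p ↦ ⟨p.1, p.2⟩, ?_, fun z hz ↦ ?_⟩
  · calc (#((S ×ˢ S).image fun p ↦ (⟨p.1, p.2⟩ : ℂ)) : ℝ) ≤ #(S ×ˢ S) := by
          exact_mod_cast card_image_le
      _ = #S ^ 2 := by rw [card_product]; push_cast; ring
      _ ≤ _ := by gcongr
  · obtain ⟨a, ha, hza⟩ := hSnet z.re ((Complex.abs_re_le_norm z).trans hz)
    obtain ⟨b, hb, hzb⟩ := hSnet z.im ((Complex.abs_im_le_norm z).trans hz)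
    refine ⟨⟨a, b⟩, mem_image.2 ⟨(a, b), mem_product.2 ⟨ha, hb⟩, rfl⟩, ?_⟩
    rw [dist_eq_norm]
    calc ‖z - ⟨a, b⟩‖ ≤ |(z - ⟨a, b⟩).re| + |(z - ⟨a, b⟩).im| := Complex.norm_le_abs_re_add_abs_im _
      _ ≤ δ / 2 + δ / 2 := add_le_add hza hzb
      _ = δ := add_halves δ

lemma exists_finset_subset_forall_dist_le_two_mul {E : Type*} [PseudoMetricSpace E] {A : Set E}
    (F : Finset E) {δ : ℝ} (hF : ∀ z ∈ A, ∃ w ∈ F, dist z w ≤ δ) :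
    ∃ G : Finset E, #G ≤ #F ∧ (∀ w ∈ G, w ∈ A) ∧ ∀ z ∈ A, ∃ w ∈ G, dist z w ≤ 2 * δ := by
  classical
  have : ∀ w, ∃ p, (∃ z ∈ A, dist z w ≤ δ) → p ∈ A ∧ dist p w ≤ δ := fun w ↦ by
    by_cases h : ∃ z ∈ A, dist z w ≤ δ
    · obtain ⟨z, hz, hzw⟩ := h
      exact ⟨z, fun _ ↦ ⟨hz, hzw⟩⟩
    · exact ⟨w, fun h' ↦ absurd h' h⟩
  choose p hp using this
  refine ⟨(F.filter fun w ↦ ∃ z ∈ A, dist z w ≤ δ).image p,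
    card_image_le.trans (card_filter_le _ _), ?_, fun z hz ↦ ?_⟩
  · simp only [mem_image, mem_filter]
    rintro _ ⟨w, ⟨-, hw⟩, rfl⟩
    exact (hp w hw).1
  · obtain ⟨w, hwF, hzw⟩ := hF z hz
    have hw : ∃ z ∈ A, dist z w ≤ δ := ⟨z, hz, hzw⟩
    refine ⟨p w, mem_image_of_mem _ (mem_filter.2 ⟨hwF, hw⟩), ?_⟩
    linarith [dist_triangle_right z (p w) w, (hp w hw).2]

end Nets

lemma min_one_mul_sq_le {C x : ℝ} (hC : 1 ≤ C) (hx : 0 ≤ x) : min 1 (C * x ^ 2) ≤ C * x := by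
  rcases le_or_gt 1 (C * x) with h | h
  · exact (min_le_left _ _).trans h
  · have : x ≤ 1 := by nlinarith
    exact (min_le_right _ _).trans (by nlinarith)

lemma norm_mean_sub_integral_le {α : Type*} [MeasurableSpace α] {μ : Measure α}
    [IsProbabilityMeasure μ] {S : Set α} (hS : ∀ᵐ x ∂μ, x ∈ S) {g : α → ℂ} {L : ℝ}
    (hg : ∀ x ∈ S, ‖g x‖ ≤ L) {a : ℕ → α} (ha : ∀ j, a j ∈ S) (n : ℕ) :
    ‖(1 / n : ℂ) * ∑ j ∈ range n, g (a j) - ∫ x, g x ∂μ‖ ≤ 2 * L := by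
  have hL : 0 ≤ L := (norm_nonneg _).trans (hg _ (ha 0))
  have hmean : ‖(1 / n : ℂ) * ∑ j ∈ range n, g (a j)‖ ≤ L := by
    rw [norm_mul, norm_div, norm_one, Complex.norm_natCast]
    rcases Nat.eq_zero_or_pos n with rfl | hn
    · simpa using hL
    calc _ ≤ 1 / n * (n * L) := by
          gcongr; simpa using norm_sum_le_of_le (range n) fun j _ ↦ hg _ (ha j)
      _ = L := by field_simp
  have hint : ‖∫ x, g x ∂μ‖ ≤ L := by
    simpa using norm_integral_le_of_norm_le_const (hS.mono fun x hx ↦ hg x hx)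
  linarith [norm_sub_le ((1 / n : ℂ) * ∑ j ∈ range n, g (a j)) (∫ x, g x ∂μ)]

def empiricalStieltjes (n : ℕ) (a : ℕ → ℂ) (z : ℂ) : ℂ := (1 / n : ℂ) * ∑ j ∈ range n, (z - a j)⁻¹

section Stieltjes

variable {μ : Measure ℂ} {ε : ℝ} {z w : ℂ}

lemma integrable_inv_sub_of_le_infDist [IsFiniteMeasure μ] (hε : 0 < ε)
    (hz : ε ≤ Metric.infDist z (measSupp μ)) : Integrable (fun x ↦ (z - x)⁻¹) μ :=
  Integrable.of_bound (by fun_prop : Measurable fun x : ℂ ↦ (z - x)⁻¹).aestronglyMeasurable ε⁻¹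
    (by filter_upwards [ae_mem_measSupp μ] with x hx using norm_inv_sub_le_of_le_infDist hε hz hx)

lemma norm_empiricalStieltjes_sub_stieltjes_le [IsProbabilityMeasure μ] (hε : 0 < ε)
    (hz : ε ≤ Metric.infDist z (measSupp μ)) (hw : ε ≤ Metric.infDist w (measSupp μ))
    {a : ℕ → ℂ} (ha : ∀ j, a j ∈ measSupp μ) (n : ℕ) :
    ‖empiricalStieltjes n a z - stieltjes μ z‖
      ≤ ‖empiricalStieltjes n a w - stieltjes μ w‖ + 2 * (‖z - w‖ / ε ^ 2) := by
  have hdiff :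
      (empiricalStieltjes n a z - stieltjes μ z) - (empiricalStieltjes n a w - stieltjes μ w)
        = (1 / n : ℂ) * ∑ j ∈ range n, ((z - a j)⁻¹ - (w - a j)⁻¹)
          - ∫ x, ((z - x)⁻¹ - (w - x)⁻¹) ∂μ := by
    rw [integral_sub (integrable_inv_sub_of_le_infDist hε hz)
      (integrable_inv_sub_of_le_infDist hε hw), empiricalStieltjes, empiricalStieltjes,
      stieltjes, stieltjes, sum_sub_distrib]
    ring
  have hdist : ∀ v, ε ≤ Metric.infDist v (measSupp μ) → ∀ x ∈ measSupp μ, ε ≤ ‖v - x‖ :=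
    fun v hv x hx ↦ hv.trans ((Metric.infDist_le_dist_of_mem hx).trans_eq (dist_eq_norm v x))
  refine (norm_le_norm_add_norm_sub' _ (empiricalStieltjes n a w - stieltjes μ w)).trans ?_
  rw [hdiff]
  gcongr
  exact norm_mean_sub_integral_le (ae_mem_measSupp μ)
    (fun x hx ↦ norm_inv_sub_sub_inv_sub_le hε (hdist z hz x hx) (hdist w hw x hx)) ha n

variable {Ω : Type*} [MeasurableSpace Ω] {P : Measure Ω} [IsProbabilityMeasure P]
  {X : ℕ → Ω → ℂ}

lemma measureReal_norm_empiricalStieltjes_sub_ge_le (hXm : ∀ j, Measurable (X j))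
    (hXd : ∀ j, P.map (X j) = μ) (hXi : iIndepFun X P) (hε : 0 < ε)
    (hw : ε ≤ Metric.infDist w (measSupp μ)) (n : ℕ) {t : ℝ} (ht : 0 ≤ t) :
    P.real {ω | t ≤ ‖empiricalStieltjes n (X · ω) w - stieltjes μ w‖}
      ≤ 4 * exp (-(n * t ^ 2 * ε ^ 2) / 8) := by
  have hB : ∀ᵐ x ∂μ, ‖(w - x)⁻¹‖ ≤ ε⁻¹ := by
    filter_upwards [ae_mem_measSupp μ] with x hx using norm_inv_sub_le_of_le_infDist hε hw hx
  refine (measureReal_norm_mean_comp_sub_integral_ge_le hXm hXd hXi (f := fun x ↦ (w - x)⁻¹)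
    (by fun_prop) hB n ht).trans_eq ?_
  rw [inv_pow, div_mul_eq_div_div, div_inv_eq_mul]
  congr 2
  ring

lemma measureReal_exists_norm_empiricalStieltjes_sub_ge_le_of_net (hXm : ∀ j, Measurable (X j))
    (hXd : ∀ j, P.map (X j) = μ) (hXi : iIndepFun X P) (hε : 0 < ε) {K : Set ℂ}
    (hK : ∀ z ∈ K, ε ≤ Metric.infDist z (measSupp μ)) {G : Finset ℂ} (hGK : ∀ w ∈ G, w ∈ K)
    {r t : ℝ} (hG : ∀ z ∈ K, ∃ w ∈ G, dist z w ≤ r) (hr : 4 * r ≤ t * ε ^ 2) (n : ℕ)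
    (ht : 0 ≤ t) :
    P.real {ω | ∃ z ∈ K, t ≤ ‖empiricalStieltjes n (X · ω) z - stieltjes μ z‖}
      ≤ #G * (4 * exp (-(n * t ^ 2 * ε ^ 2) / 32)) := by
  have : IsProbabilityMeasure μ := hXd 0 ▸ Measure.isProbabilityMeasure_map (hXm 0).aemeasurable
  have hsample : ∀ᵐ ω ∂P, ∀ j, X j ω ∈ measSupp μ := ae_all_iff.2 fun j ↦
    ae_of_ae_map (hXm j).aemeasurable ((hXd j).symm ▸ ae_mem_measSupp μ)
  have hcover : {ω | ∃ z ∈ K, t ≤ ‖empiricalStieltjes n (X · ω) z - stieltjes μ z‖}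
      ≤ᵐ[P] ⋃ w ∈ G, {ω | t / 2 ≤ ‖empiricalStieltjes n (X · ω) w - stieltjes μ w‖} := by
    filter_upwards [hsample] with ω hω ⟨z, hzK, hz⟩
    obtain ⟨w, hwG, hzw⟩ := hG z hzK
    have hlip := norm_empiricalStieltjes_sub_stieltjes_le hε (hK z hzK) (hK w (hGK w hwG)) hω n
    have hzw' : ‖z - w‖ / ε ^ 2 ≤ t / 4 := by
      rw [div_le_iff₀ (by positivity), ← dist_eq_norm]
      linarith
    exact Set.mem_biUnion hwG (by simp only [Set.mem_ofPred_eq]; linarith)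
  calc _ ≤ P.real (⋃ w ∈ G, {ω | t / 2 ≤ ‖empiricalStieltjes n (X · ω) w - stieltjes μ w‖}) :=
        ENNReal.toReal_mono (measure_ne_top _ _) (measure_mono_ae hcover)
    _ ≤ ∑ w ∈ G, P.real {ω | t / 2 ≤ ‖empiricalStieltjes n (X · ω) w - stieltjes μ w‖} :=
        measureReal_biUnion_finset_le _ _
    _ ≤ ∑ w ∈ G, 4 * exp (-(n * (t / 2) ^ 2 * ε ^ 2) / 8) := sum_le_sum fun w hw ↦
        measureReal_norm_empiricalStieltjes_sub_ge_le hXm hXd hXi hε (hK w (hGK w hw)) n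
          (by positivity)
    _ = _ := by rw [sum_const, nsmul_eq_mul]; congr 3; ring

lemma measureReal_exists_norm_empiricalStieltjes_sub_ge_le (hXm : ∀ j, Measurable (X j))
    (hXd : ∀ j, P.map (X j) = μ) (hXi : iIndepFun X P) (n : ℕ) {M t : ℝ} (hM : 0 ≤ M)
    (hε : 0 < ε) (ht : 0 < t) :
    P.real {ω | ∃ z : ℂ, ‖z‖ ≤ M ∧ ε ≤ Metric.infDist z (measSupp μ) ∧
        t ≤ ‖empiricalStieltjes n (X · ω) z - stieltjes μ z‖}
      ≤ 36 * ((1 + 40 * M / (ε ^ 2 * t)) * exp (-(1 / 64 * n * t ^ 2 * ε ^ 2))) ^ 2 := by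
  set K := {z : ℂ | ‖z‖ ≤ M ∧ ε ≤ Metric.infDist z (measSupp μ)}
  set u := 40 * M / (ε ^ 2 * t)
  obtain ⟨F, hF, hFnet⟩ :=
    Complex.exists_finset_card_le_forall_dist_le hM (δ := t * ε ^ 2 / 8) (by positivity)
  obtain ⟨G, hGF, hGK, hG⟩ :=
    exists_finset_subset_forall_dist_le_two_mul F (A := K) fun z hz ↦ hFnet z hz.1
  have hcard : (#G : ℝ) ≤ 9 * (1 + u) ^ 2 := by
    have hu : 2 * M / (t * ε ^ 2 / 8) = 2 / 5 * u := by simp only [u]; field_simp; ring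
    have : 0 ≤ u := by positivity
    refine (Nat.cast_le.2 hGF).trans (hF.trans ?_)
    rw [hu]
    nlinarith
  have hexp : exp (-(n * t ^ 2 * ε ^ 2) / 32) = exp (-(1 / 64 * n * t ^ 2 * ε ^ 2)) ^ 2 := by
    rw [← Real.exp_nat_mul]
    congr 1
    push_cast
    ring
  calc _ ≤ P.real {ω | ∃ z ∈ K, t ≤ ‖empiricalStieltjes n (X · ω) z - stieltjes μ z‖} :=
        measureReal_mono (by rintro ω ⟨z, hzM, hzd, hz⟩; exact ⟨z, ⟨hzM, hzd⟩, hz⟩)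
    _ ≤ #G * (4 * exp (-(n * t ^ 2 * ε ^ 2) / 32)) :=
        measureReal_exists_norm_empiricalStieltjes_sub_ge_le_of_net hXm hXd hXi hε
          (fun z hz ↦ hz.2) hGK hG (by linarith) n ht.le
    _ ≤ 9 * (1 + u) ^ 2 * (4 * exp (-(n * t ^ 2 * ε ^ 2) / 32)) := by gcongr
    _ = _ := by rw [hexp]; ring

end Stieltjes

/-- **Lemma (uniform concentration of the empirical Stieltjes transform).**
There are absolute constants C, c > 0 such that: if μ is a compactly supported
probability measure on ℂ and X₁, …, Xₙ are iid with distribution μ, then for every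
M, ε, t > 0,
P( sup_{|z| ≤ M, dist(z, supp μ) ≥ ε} |(1/n) Σ_j 1/(z − X_j) − m_μ(z)| ≥ t )
  ≤ C (1 + 40M/(ε²t)) exp(−c n t² ε²). -/
theorem stieltjes_uniform_concentration :
    ∃ C > (0 : ℝ), ∃ c > (0 : ℝ),
      ∀ (μ : Measure ℂ), IsProbabilityMeasure μ → IsCompact (measSupp μ) →
      ∀ (Ω : Type) (mΩ : MeasurableSpace Ω) (P : Measure Ω), IsProbabilityMeasure P →
      ∀ (X : ℕ → Ω → ℂ),
        (∀ j, Measurable (X j)) →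
        (∀ j, Measure.map (X j) P = μ) →
        iIndepFun X P →
        ∀ (n : ℕ) (M ε t : ℝ), 0 < M → 0 < ε → 0 < t →
          P {ω | ∃ z : ℂ, ‖z‖ ≤ M ∧ ε ≤ Metric.infDist z (measSupp μ) ∧
              t ≤ ‖(1 / n : ℂ) * ∑ j ∈ Finset.range n, (z - X j ω)⁻¹ - stieltjes μ z‖}
            ≤ ENNReal.ofReal (C * (1 + 40 * M / (ε ^ 2 * t)) *
                Real.exp (-(c * n * t ^ 2 * ε ^ 2))) := by
  refine ⟨36, by norm_num, 1 / 64, by norm_num, ?_⟩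
  intro μ _ _ Ω _ P _ X hXm hXd hXi n M ε t hM hε ht
  rw [← ofReal_measureReal]
  refine ENNReal.ofReal_le_ofReal ?_
  calc _ ≤ min 1 (36 * ((1 + 40 * M / (ε ^ 2 * t)) * exp (-(1 / 64 * n * t ^ 2 * ε ^ 2))) ^ 2) :=
        le_min measureReal_le_one
          (measureReal_exists_norm_empiricalStieltjes_sub_ge_le hXm hXd hXi n hM.le hε ht)
    _ ≤ 36 * ((1 + 40 * M / (ε ^ 2 * t)) * exp (-(1 / 64 * n * t ^ 2 * ε ^ 2))) :=
        min_one_mul_sq_le (by norm_num) (by positivity)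
    _ = _ := by ring
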